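/- arXiv:1708.06090 — 4 statements merged into one kernel-verified Lean document; each statement's English description precedes it below -/
import Mathlib

section
/- Let (A, m) be a Noetherian local ring, let n ≥ 1, and suppose z ∈ m^{n-1} \ m^n satisfies z·m ⊆ m^{n+1}. Then the ideal I = (z) + m^n satisfies μ(I) = μ(m^n) + 1, where μ denotes the minimal number of generators. In particular, m^n does not have the Rees property. -/
/-!
Over a local ring, `μ(J) = dim_k J/mJ` for finitely generated `J`. Put `I = (z) + mⁿ`. Since
`z·m ⊆ mⁿ⁺¹ = m·mⁿ`, we get `mI = m·mⁿ`, so `mⁿ/m·mⁿ → I/mI` is injective; it is not onto, for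
otherwise `I = mⁿ + mI` and Nakayama would give `I = mⁿ ∌ z`. Hence `μ(mⁿ) < μ(I) ≤ μ(mⁿ) + 1`.
-/

open IsLocalRing

/-- `mu I` is the minimal number of generators of the ideal `I`. -/
noncomputable def mu {A : Type*} [CommRing A] (I : Ideal A) : ℕ :=
  sInf {n | ∃ s : Finset A, s.card = n ∧ Ideal.span (s : Set A) = I}

theorem mu_eq_spanFinrank {A : Type*} [CommRing A] (I : Ideal A) : mu I = I.spanFinrank := by
  rw [Submodule.spanFinrank_eq_iInf, iInf, mu]
  congr 1
  ext n
  simp [eq_comm, and_comm, Ideal.span]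

namespace Submodule

variable {R M : Type*} [CommRing R] [AddCommGroup M] [Module R M]

theorem spanFinrank_span_singleton_sup_le {N : Submodule R M} (hN : N.FG) (z : M) :
    (span R {z} ⊔ N).spanFinrank ≤ N.spanFinrank + 1 := by
  classical
  obtain ⟨s, hs, rfl⟩ := hN.exists_span_finset_card_eq_spanFinrank
  calc (span R {z} ⊔ span R s).spanFinrank
      = (span R ((insert z s : Finset M) : Set M)).spanFinrank := by
        rw [Finset.coe_insert, span_insert]
    _ ≤ (insert z s).card :=
        (spanFinrank_span_le_ncard_of_finite (Finset.finite_toSet _)).trans_eq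
          (Set.ncard_coe_finset _)
    _ ≤ _ := hs ▸ Finset.card_insert_le z s

variable [IsLocalRing R]

theorem spanFinrank_lt_of_lt_of_smul_le {N P : Submodule R M} (hNP : N < P) (hN : N.FG)
    (hP : P.FG) (h : maximalIdeal R • P ≤ maximalIdeal R • N) :
    N.spanFinrank < P.spanFinrank := by
  rw [IsLocalRing.spanFinrank_eq_finrank_quotient N hN,
    IsLocalRing.spanFinrank_eq_finrank_quotient P hP]
  let f : (N ⧸ maximalIdeal R • (⊤ : Submodule R N)) →ₗ[R]
      P ⧸ maximalIdeal R • (⊤ : Submodule R P) :=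
    mapQ _ _ (inclusion hNP.le) (smul_top_le_comap_smul_top _ _)
  let g := f.extendScalarsOfSurjective (S := R ⧸ maximalIdeal R) Ideal.Quotient.mk_surjective
  have : Module.Finite R P := Module.Finite.iff_fg.mpr hP
  have : Module.Finite (R ⧸ maximalIdeal R) (P ⧸ maximalIdeal R • (⊤ : Submodule R P)) :=
    Module.Finite.of_restrictScalars_finite R _ _
  have hinj : Function.Injective g := by
    rw [← LinearMap.ker_eq_bot, LinearMap.ker_eq_bot']
    rintro ⟨x⟩ hx
    replace hx : inclusion hNP.le x ∈ maximalIdeal R • (⊤ : Submodule R P) :=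
      (Quotient.mk_eq_zero _).mp hx
    rw [mem_smul_top_iff] at hx
    exact (Quotient.mk_eq_zero _).mpr ((mem_smul_top_iff _ _ _).mpr (h hx))
  have hsurj : ¬ Function.Surjective g := by
    intro hg
    refine hNP.not_ge (le_of_le_smul_of_le_jacobson_bot hP (maximalIdeal_le_jacobson ⊥) ?_)
    intro p hp
    obtain ⟨⟨x⟩, hx⟩ := hg (Quotient.mk ⟨p, hp⟩)
    replace hx := (Quotient.eq _).mp hx
    rw [mem_smul_top_iff] at hx
    rw [← add_sub_cancel (x : M) p]
    exact add_mem_sup x.2 (sub_mem_comm_iff.mp (by simpa using hx))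
  refine (LinearMap.finrank_le_finrank_of_injective hinj).lt_of_ne fun heq => hsurj ?_
  have : Module.Finite R N := Module.Finite.iff_fg.mpr hN
  have : Module.Finite (R ⧸ maximalIdeal R) (N ⧸ maximalIdeal R • (⊤ : Submodule R N)) :=
    Module.Finite.of_restrictScalars_finite R _ _
  let := Ideal.Quotient.field (maximalIdeal R)
  exact (LinearMap.injective_iff_surjective_of_finrank_eq_finrank heq).mp hinj

theorem spanFinrank_span_singleton_sup_eq {N : Submodule R M} {z : M} (hN : N.FG) (hz : z ∉ N)
    (hmz : ∀ a ∈ maximalIdeal R, a • z ∈ maximalIdeal R • N) :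
    (span R {z} ⊔ N).spanFinrank = N.spanFinrank + 1 := by
  refine le_antisymm (spanFinrank_span_singleton_sup_le hN z) (Nat.succ_le_of_lt ?_)
  have hlt : N < span R {z} ⊔ N :=
    lt_of_le_of_ne le_sup_right fun h => hz (h ▸ mem_sup_left (mem_span_singleton_self z))
  refine spanFinrank_lt_of_lt_of_smul_le hlt hN ((fg_span_singleton z).sup hN) ?_
  rw [smul_sup]
  refine sup_le (smul_le.mpr fun a ha x hx => ?_) le_rfl
  obtain ⟨b, rfl⟩ := mem_span_singleton.mp hx
  rw [smul_smul]
  exact hmz _ (Ideal.mul_mem_right b _ ha)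

end Submodule

theorem stmt0_general {A : Type*} [CommRing A] [IsNoetherianRing A] [IsLocalRing A]
    (n : ℕ) (z : A)
    (hz2 : z ∉ maximalIdeal A ^ n)
    (hz3 : ∀ a ∈ maximalIdeal A, z * a ∈ maximalIdeal A ^ (n + 1)) :
    mu (Ideal.span {z} ⊔ maximalIdeal A ^ n) = mu (maximalIdeal A ^ n) + 1 ∧
    ¬ (∀ J : Ideal A, maximalIdeal A ^ n ≤ J → mu J ≤ mu (maximalIdeal A ^ n)) := by
  have hmu : mu (Ideal.span {z} ⊔ maximalIdeal A ^ n) = mu (maximalIdeal A ^ n) + 1 := by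
    rw [mu_eq_spanFinrank, mu_eq_spanFinrank]
    refine Submodule.spanFinrank_span_singleton_sup_eq (IsNoetherian.noetherian _) hz2
      fun a ha => ?_
    rw [smul_eq_mul, smul_eq_mul, ← pow_succ', mul_comm]
    exact hz3 a ha
  refine ⟨hmu, fun hRees => ?_⟩
  have := hRees (Ideal.span {z} ⊔ maximalIdeal A ^ n) le_sup_right
  omega

/-- If `z ∈ m^{n-1} \ m^n` satisfies `z·m ⊆ m^{n+1}`, then `I = (z) + m^n`
satisfies `μ(I) = μ(m^n) + 1`; in particular `m^n` fails the Rees property. -/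
theorem stmt0 {A : Type*} [CommRing A] [IsNoetherianRing A] [IsLocalRing A]
    (n : ℕ) (hn : 1 ≤ n) (z : A)
    (hz1 : z ∈ maximalIdeal A ^ (n - 1)) (hz2 : z ∉ maximalIdeal A ^ n)
    (hz3 : ∀ a ∈ maximalIdeal A, z * a ∈ maximalIdeal A ^ (n + 1)) :
    mu (Ideal.span {z} ⊔ maximalIdeal A ^ n) = mu (maximalIdeal A ^ n) + 1 ∧
    ¬ (∀ J : Ideal A, maximalIdeal A ^ n ≤ J → mu J ≤ mu (maximalIdeal A ^ n)) :=
  stmt0_general n z hz2 hz3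
end

section
/- Let (A, m) be a Noetherian local ring and I an m-primary m-full ideal, i.e., there exists x ∈ m with (mI : x) = I. Then for every ideal J with I ⊆ J, one has μ(J) ≤ μ(I). -/
/-!
Write `ℓ` for length over `A` and `m` for the maximal ideal. By Nakayama, `μ N = ℓ (N / mN)`
for every ideal `N`, so additivity of length along `mI ⊆ I ⊆ J` and `mI ⊆ mJ ⊆ J` gives
`μ I + ℓ (J / I) = ℓ (J / mI) = ℓ (mJ / mI) + μ J`. Since `mI : x = I`, multiplication by `x`
embeds `J / I` into `mJ / mI`, and `ℓ (J / I)` is finite because `I` is `m`-primary.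
-/

open IsLocalRing

namespace Submodule

section Ring

variable {R M M' : Type*} [Ring R] [AddCommGroup M] [Module R M] [AddCommGroup M'] [Module R M']

theorem length_map_mkQ_eq_add {L K P : Submodule R M} (hLK : L ≤ K) (hKP : K ≤ P) :
    Module.length R (P.map L.mkQ) =
      Module.length R (K.map L.mkQ) + Module.length R (P.map K.mkQ) := by
  refine Module.length_eq_add_of_exact (inclusion (map_mono hKP))
    ((factor hLK).restrict fun y hy => ?_) (inclusion_injective _) ?_ ?_
  · obtain ⟨a, ha, rfl⟩ := mem_map.mp hy
    rw [factor_mk]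
    exact mem_map_of_mem ha
  · rintro ⟨_, a, ha, rfl⟩
    exact ⟨⟨L.mkQ a, mem_map_of_mem ha⟩, Subtype.ext (factor_mk hLK a)⟩
  · rintro ⟨_, a, -, rfl⟩
    have hmem : L.mkQ a ∈ K.map L.mkQ ↔ a ∈ K := by
      rw [← mem_comap, comap_map_mkQ, sup_eq_right.mpr hLK]
    simp only [Set.mem_range, Subtype.ext_iff, LinearMap.coe_restrict_apply, factor_mk,
      ZeroMemClass.coe_zero, coe_inclusion, Subtype.exists, exists_prop, exists_eq_right]
    rw [hmem, mkQ_apply, Quotient.mk_eq_zero]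

theorem length_le_length_of_map_le {f : M →ₗ[R] M'} (hf : Function.Injective f)
    {N : Submodule R M} {N' : Submodule R M'} (h : N.map f ≤ N') :
    Module.length R N ≤ Module.length R N' :=
  Module.length_le_of_injective (f.restrict fun _ hx => h (mem_map_of_mem hx))
    fun _ _ hab => Subtype.ext (hf (congrArg Subtype.val hab))

end Ring

theorem length_quotient_smul_top_eq_length_map_mkQ {R M : Type*} [CommRing R] [AddCommGroup M]
    [Module R M] (I : Ideal R) (N : Submodule R M) :
    Module.length R (N ⧸ I • (⊤ : Submodule R N)) = Module.length R (N.map (I • N).mkQ) := by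
  have hker : LinearMap.ker ((I • N).mkQ.submoduleMap N) = I • ⊤ := by
    rw [LinearMap.ker_submoduleMap, ker_mkQ,
      ← comap_map_eq_of_injective N.injective_subtype (I • ⊤), map_smul'', map_top, range_subtype]
  exact ((quotEquivOfEq _ _ hker.symm).trans
    (LinearMap.quotKerEquivOfSurjective _ (LinearMap.submoduleMap_surjective _ _))).length_eq

end Submodule

namespace IsLocalRing

variable {R : Type*} [CommRing R] [IsLocalRing R]

theorem length_quotient_smul_top_eq_spanFinrank {M : Type*} [AddCommGroup M] [Module R M]
    {N : Submodule R M} (hN : N.FG) :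
    Module.length R (N ⧸ maximalIdeal R • (⊤ : Submodule R N)) = N.spanFinrank := by
  have : Module.Finite R N := Module.Finite.iff_fg.mpr hN
  have : Module.Finite (R ⧸ maximalIdeal R) (N ⧸ maximalIdeal R • (⊤ : Submodule R N)) :=
    Module.Finite.of_restrictScalars_finite R _ _
  let := Ideal.Quotient.field (maximalIdeal R)
  rw [spanFinrank_eq_finrank_quotient N hN,
    Module.length_eq_of_surjective (R := R ⧸ maximalIdeal R) Ideal.Quotient.mk_surjective]
  exact Module.length_eq_finrank _ _

theorem isArtinianRing_quotient_of_pow_le [IsNoetherianRing R] {I : Ideal R} {n : ℕ}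
    (h : maximalIdeal R ^ n ≤ I) : IsArtinianRing (R ⧸ I) := by
  rcases eq_or_ne I ⊤ with rfl | hI
  · infer_instance
  have hn : n ≠ 0 := by
    rintro rfl
    exact hI (top_le_iff.mp (by simpa using h))
  have hrad : I.radical = maximalIdeal R := by
    refine le_antisymm ?_ ?_
    · exact (Ideal.radical_mono (le_maximalIdeal hI)).trans
        (maximalIdeal.isMaximal R).isPrime.radical.le
    · calc maximalIdeal R = (maximalIdeal R ^ n).radical :=
            ((Ideal.radical_pow _ hn).trans (maximalIdeal.isMaximal R).isPrime.radical).symm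
        _ ≤ I.radical := Ideal.radical_mono h
  apply quotient_artinian_of_mem_minimalPrimes_of_isLocalRing
  rw [← Ideal.radical_minimalPrimes, hrad, Ideal.minimalPrimes_eq_subsingleton_self]
  exact Set.mem_singleton _

end IsLocalRing

theorem mu_eq_length_map_mkQ {A : Type*} [CommRing A] [IsNoetherianRing A] [IsLocalRing A]
    (J : Ideal A) :
    (mu J : ℕ∞) = Module.length A (Submodule.map (maximalIdeal A * J).mkQ J) := by
  rw [mu_eq_spanFinrank, ← length_quotient_smul_top_eq_spanFinrank (IsNoetherian.noetherian J),
    Submodule.length_quotient_smul_top_eq_length_map_mkQ, Ideal.smul_eq_mul]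

theorem Ideal.mapQ_mulLeft_injective_of_colon_eq {R : Type*} [CommRing R] {I K : Ideal R} {x : R}
    (hcolon : K.colon (Ideal.span {x}) = I) (hle : I ≤ Submodule.comap (LinearMap.mulLeft R x) K) :
    Function.Injective (Submodule.mapQ I K (LinearMap.mulLeft R x) hle) := by
  have hcomap : Submodule.comap (LinearMap.mulLeft R x) K = I := by
    ext a
    rw [← hcolon, Submodule.mem_comap, LinearMap.mulLeft_apply, Ideal.mem_colon_span_singleton,
      mul_comm]
  rw [← LinearMap.ker_eq_bot, Submodule.ker_mapQ, hcomap, Submodule.mkQ_map_self]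

theorem Ideal.length_map_mkQ_le_of_colon_eq {R : Type*} [CommRing R] {𝔞 I : Ideal R} {x : R}
    (hx : x ∈ 𝔞) (hcolon : (𝔞 * I).colon (Ideal.span {x}) = I) (J : Ideal R) :
    Module.length R (Submodule.map I.mkQ J) ≤
      Module.length R (Submodule.map (𝔞 * I).mkQ (𝔞 * J)) := by
  refine Submodule.length_le_length_of_map_le
    (mapQ_mulLeft_injective_of_colon_eq hcolon fun a ha => mul_mem_mul hx ha) ?_
  rintro _ ⟨_, ⟨a, ha, rfl⟩, rfl⟩
  exact Submodule.mem_map_of_mem (mul_mem_mul hx ha)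

theorem stmt1_general {A : Type*} [CommRing A] [IsNoetherianRing A] [IsLocalRing A]
    (I : Ideal A) (hprimary : ∃ k : ℕ, maximalIdeal A ^ k ≤ I)
    (hfull : ∃ x ∈ maximalIdeal A,
      (maximalIdeal A * I).colon (Ideal.span {x}) = I)
    (J : Ideal A) (hIJ : I ≤ J) :
    mu J ≤ mu I := by
  obtain ⟨k, hk⟩ := hprimary
  obtain ⟨x, hxm, hcolon⟩ := hfull
  have := isArtinianRing_quotient_of_pow_le hk
  have : IsArtinian A (A ⧸ I) :=
    isArtinian_of_surjective_algebraMap (Ideal.Quotient.mk_surjective (I := I))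
  have hdecomp : (mu I : ℕ∞) + Module.length A (Submodule.map I.mkQ J) =
      Module.length A (Submodule.map (maximalIdeal A * I).mkQ (maximalIdeal A * J)) + mu J := by
    rw [mu_eq_length_map_mkQ, mu_eq_length_map_mkQ,
      ← Submodule.length_map_mkQ_eq_add Ideal.mul_le_right hIJ,
      Submodule.length_map_mkQ_eq_add (Ideal.mul_mono_right hIJ) Ideal.mul_le_right]
  have hfin : Module.length A (Submodule.map I.mkQ J) ≠ ⊤ := Module.length_ne_top
  have hle : (mu J : ℕ∞) + Module.length A (Submodule.map I.mkQ J) ≤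
      mu I + Module.length A (Submodule.map I.mkQ J) := by
    rw [hdecomp, add_comm]
    gcongr
    exact Ideal.length_map_mkQ_le_of_colon_eq hxm hcolon J
  exact_mod_cast (ENat.add_le_add_iff_right hfin).mp hle

/-- An `m`-primary `m`-full ideal has the Rees property. -/
theorem stmt1 {A : Type*} [CommRing A] [IsNoetherianRing A] [IsLocalRing A]
    (I : Ideal A) (hIm : I ≤ maximalIdeal A) (hprimary : ∃ k : ℕ, maximalIdeal A ^ k ≤ I)
    (hfull : ∃ x ∈ maximalIdeal A,
      (maximalIdeal A * I).colon (Ideal.span {x}) = I)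
    (J : Ideal A) (hIJ : I ≤ J) :
    mu J ≤ mu I :=
  stmt1_general I hprimary hfull J hIJ
end

section
/- Let (A, m) be a Noetherian local ring with infinite residue field and let I be an integrally closed ideal of positive height. Then I is m-full, i.e., there exists x ∈ m such that (mI : x) = I. -/
open IsLocalRing

/-- The integral closure of an ideal `I`: the set of elements satisfying an equation
of integral dependence `x^n + a₁ x^{n-1} + ⋯ + aₙ = 0` with `aᵢ ∈ Iⁱ`. -/
def idealIntegralClosure {A : Type*} [CommRing A] (I : Ideal A) : Set A :=
  {x | ∃ n : ℕ, 0 < n ∧ ∃ a : ℕ → A, (∀ i ∈ Finset.Icc 1 n, a i ∈ I ^ i) ∧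
    x ^ n + ∑ i ∈ Finset.Icc 1 n, a i * x ^ (n - i) = 0}


namespace ReesMfull

open Polynomial

variable {A : Type*} [CommRing A]

lemma CX_mem_rees {J : Ideal A} {z : A} (h : z ∈ J) : (C z * X : A[X]) ∈ reesAlgebra J := by
  rw [C_mul_X_eq_monomial]
  exact reesAlgebra.monomial_mem.mpr (by simpa using h)

lemma rees_mul_mem {J : Ideal A} {S : Subalgebra (reesAlgebra J) A[X]} {r d : A[X]}
    (hr : r ∈ reesAlgebra J) (hd : d ∈ S) : r * d ∈ S := by
  have : r * d = (⟨r, hr⟩ : reesAlgebra J) • d := by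
    rw [Subalgebra.smul_def, smul_eq_mul]
  rw [this]
  exact S.smul_mem hd _

/-- The integral closure of an ideal, defined via the integral closure of the Rees algebra
inside `A[X]`. -/
def icl (J : Ideal A) : Ideal A where
  carrier := {z | (C z * X : A[X]) ∈ integralClosure (reesAlgebra J) A[X]}
  add_mem' := by
    intro a b ha hb
    have h : (C (a + b) * X : A[X]) = C a * X + C b * X := by
      rw [C_add, add_mul]
    simpa only [Set.mem_setOf_eq, h] using add_mem ha hb
  zero_mem' := by
    simp only [Set.mem_setOf_eq, map_zero, zero_mul]
    exact zero_mem _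
  smul_mem' := by
    intro c z hz
    have h : (C (c • z) * X : A[X]) = C c * (C z * X) := by
      rw [smul_eq_mul, C_mul, mul_assoc]
    simp only [Set.mem_setOf_eq, h]
    exact rees_mul_mem (Subalgebra.algebraMap_mem _ c) hz

lemma mem_icl {J : Ideal A} {z : A} :
    z ∈ icl J ↔ (C z * X : A[X]) ∈ integralClosure (reesAlgebra J) A[X] := Iff.rfl

lemma le_icl (J : Ideal A) : J ≤ icl J := by
  intro z hz
  rw [mem_icl]
  have h := isIntegral_algebraMap (R := reesAlgebra J) (A := A[X])
    (x := ⟨C z * X, CX_mem_rees hz⟩)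
  exact h


lemma extraction {J : Ideal A} [Nontrivial A] {z : A}
    (hz : IsIntegral (reesAlgebra J) (C z * X : A[X])) :
    z ∈ idealIntegralClosure J := by
  obtain ⟨p, hmon, hev⟩ := hz
  set f := algebraMap (reesAlgebra J) A[X] with hf
  set q := p.map f with hq
  have hqmon : q.Monic := hmon.map f
  have hev' : q.eval (C z * X) = 0 := by
    rw [hq, eval_map]; exact hev
  set N := q.natDegree with hN
  have hsum : ∑ j ∈ Finset.range (N + 1), q.coeff j * (C z * X) ^ j = 0 := by
    rw [← eval_eq_sum_range]; exact hev'
  have hmemq : ∀ j, q.coeff j ∈ reesAlgebra J := by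
    intro j
    rw [hq, coeff_map]
    exact (p.coeff j).2
  have hb : ∀ j, (q.coeff j).coeff (N - j) ∈ J ^ (N - j) := fun j => (hmemq j) _
  have hcoeff : ∑ j ∈ Finset.range (N + 1), z ^ j * (q.coeff j).coeff (N - j) = 0 := by
    have h1 := congrArg (fun r : A[X] => r.coeff N) hsum
    simp only [finset_sum_coeff, coeff_zero] at h1
    rw [← h1]
    apply Finset.sum_congr rfl
    intro j hj
    have hjN : j ≤ N := Nat.lt_succ_iff.mp (Finset.mem_range.mp hj)
    have e1 : (C z * X : A[X]) ^ j = C (z ^ j) * X ^ j := by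
      rw [mul_pow, ← C_pow]
    rw [e1, ← mul_assoc, coeff_mul_X_pow', if_pos hjN, coeff_mul_C]
    ring
  have hbN : (q.coeff N).coeff 0 = 1 := by
    rw [hqmon.coeff_natDegree]
    simp
  have hNpos : 0 < N := by
    rcases Nat.eq_zero_or_pos N with h0 | h
    · exfalso
      rw [h0] at hcoeff hbN
      simp only [zero_add, Finset.range_one, Finset.sum_singleton, pow_zero, one_mul,
        Nat.sub_zero, hbN] at hcoeff
      exact one_ne_zero hcoeff
    · exact h
  refine ⟨N, hNpos, fun i => (q.coeff (N - i)).coeff i, ?_, ?_⟩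
  · intro i hi
    obtain ⟨hi1, hi2⟩ := Finset.mem_Icc.mp hi
    have : N - (N - i) = i := Nat.sub_sub_self hi2
    have h := hb (N - i)
    rwa [this] at h
  · have hsplit := Finset.sum_range_succ (fun j => z ^ j * (q.coeff j).coeff (N - j)) N
    rw [hsplit] at hcoeff
    simp only [Nat.sub_self, hbN, mul_one] at hcoeff
    have hre : ∑ i ∈ Finset.Icc 1 N, (q.coeff (N - i)).coeff i * z ^ (N - i)
        = ∑ j ∈ Finset.range N, z ^ j * (q.coeff j).coeff (N - j) := by
      apply Finset.sum_nbij' (fun i => N - i) (fun j => N - j)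
      · intro i hi
        obtain ⟨hi1, hi2⟩ := Finset.mem_Icc.mp hi
        exact Finset.mem_range.mpr (by omega)
      · intro j hj
        have := Finset.mem_range.mp hj
        exact Finset.mem_Icc.mpr (by omega)
      · intro i hi
        obtain ⟨hi1, hi2⟩ := Finset.mem_Icc.mp hi
        omega
      · intro j hj
        have := Finset.mem_range.mp hj
        omega
      · intro i hi
        obtain ⟨hi1, hi2⟩ := Finset.mem_Icc.mp hi
        rw [Nat.sub_sub_self hi2]
        exact mul_comm _ _
    rw [hre, add_comm]
    exact hcoeff


lemma mem_intClosure_of_mem_rees {J : Ideal A} {r : A[X]} (h : r ∈ reesAlgebra J) :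
    r ∈ integralClosure (reesAlgebra J) A[X] :=
  isIntegral_algebraMap (R := reesAlgebra J) (A := A[X]) (x := ⟨r, h⟩)

lemma rees_icl_subset {J : Ideal A} :
    (reesAlgebra (icl J) : Set A[X]) ⊆ (integralClosure (reesAlgebra J) A[X] : Set A[X]) := by
  intro pp hpp
  replace hpp : pp ∈ Algebra.adjoin A
      (Submodule.map (monomial 1 : A →ₗ[A] A[X]) (icl J) : Set A[X]) := by
    rwa [adjoin_monomial_eq_reesAlgebra]
  induction hpp using Algebra.adjoin_induction with
  | mem x hx =>
      obtain ⟨z, hz, rfl⟩ := hx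
      rw [← C_mul_X_eq_monomial]
      exact (mem_icl).mp hz
  | algebraMap r =>
      exact mem_intClosure_of_mem_rees (Subalgebra.algebraMap_mem _ r)
  | add x y hx hy ihx ihy => exact add_mem ihx ihy
  | mul x y hx hy ihx ihy => exact mul_mem ihx ihy

lemma transfer_isIntegral {J : Ideal A} {x : A[X]}
    (hx : IsIntegral (reesAlgebra (icl J)) x) :
    IsIntegral (integralClosure (reesAlgebra J) A[X]) x := by
  obtain ⟨p, hmon, hev⟩ := hx
  let h : (reesAlgebra (icl J)) →+* (integralClosure (reesAlgebra J) A[X]) :=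
    { toFun := fun y => ⟨(y : A[X]), rees_icl_subset y.2⟩
      map_one' := rfl
      map_mul' := fun a b => rfl
      map_zero' := rfl
      map_add' := fun a b => rfl }
  refine ⟨p.map h, hmon.map h, ?_⟩
  rw [eval₂_map]
  have hc : (algebraMap (integralClosure (reesAlgebra J) A[X]) A[X]).comp h
      = algebraMap (reesAlgebra (icl J)) A[X] := by
    ext y; rfl
  rw [hc]; exact hev

set_option synthInstance.maxHeartbeats 1000000 in
set_option maxHeartbeats 1000000 in
lemma icl_closed {J : Ideal A} {x : A}
    (hx : IsIntegral (reesAlgebra (icl J)) (C x * X : A[X])) : x ∈ icl J := by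
  have h1 := transfer_isIntegral hx
  haveI : Algebra.IsIntegral (reesAlgebra J) (integralClosure (reesAlgebra J) A[X]) :=
    ⟨fun y => integralClosure.isIntegral y⟩
  have h2 : IsIntegral (reesAlgebra J) (C x * X : A[X]) := isIntegral_trans _ h1
  exact (mem_icl).mpr h2


lemma rees_mono {J K : Ideal A} (h : J ≤ K) : reesAlgebra J ≤ reesAlgebra K := by
  intro p hp
  rw [mem_reesAlgebra_iff] at hp ⊢
  exact fun i => Ideal.pow_right_mono h i (hp i)

set_option maxHeartbeats 1000000 in
set_option synthInstance.maxHeartbeats 1000000 in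
lemma reduction [IsNoetherianRing A] (J : Ideal A) :
    ∃ n : ℕ, (icl J) ^ (n + 1) ≤ J * (icl J) ^ n := by
  classical
  set K := icl J with hK
  obtain ⟨s, hs⟩ : K.FG := IsNoetherian.noetherian K
  set R₀ := reesAlgebra J with hR₀
  set M₀ := Algebra.adjoin R₀ ((fun a : A => C a * X) '' (s : Set A)) with hM₀
  have hgen_int : ∀ y ∈ ((fun a : A => C a * X) '' (s : Set A)), IsIntegral R₀ y := by
    rintro y ⟨a, ha, rfl⟩
    have haK : a ∈ K := hs ▸ Ideal.subset_span ha
    exact mem_icl.mp haK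
  have hM₀fg : (Subalgebra.toSubmodule M₀).FG :=
    fg_adjoin_of_finite (Set.Finite.image _ s.finite_toSet) hgen_int
  obtain ⟨T, hT⟩ := hM₀fg
  set n := T.sup Polynomial.natDegree with hn
  have hM₀rees : ∀ y ∈ M₀, y ∈ reesAlgebra K := by
    intro y hy
    induction hy using Algebra.adjoin_induction with
    | mem x hx =>
        obtain ⟨a, ha, rfl⟩ := hx
        exact CX_mem_rees (hs ▸ Ideal.subset_span ha)
    | algebraMap r => exact rees_mono (le_icl J) r.2
    | add x y hx hy ihx ihy => exact add_mem ihx ihy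
    | mul x y hx hy ihx ihy => exact mul_mem ihx ihy
  have hCX : ∀ c ∈ K, (C c * X : A[X]) ∈ M₀ := by
    intro c hc
    rw [← hs] at hc
    induction hc using Submodule.span_induction with
    | mem x hx => exact Algebra.subset_adjoin ⟨x, hx, rfl⟩
    | zero => simpa using M₀.zero_mem
    | add x y hx hy ihx ihy =>
        have : (C (x + y) * X : A[X]) = C x * X + C y * X := by rw [C_add, add_mul]
        rw [this]; exact M₀.add_mem ihx ihy
    | smul a x hx ih =>
        have : (C (a • x) * X : A[X]) = C a * (C x * X) := by
          rw [smul_eq_mul, C_mul, mul_assoc]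
        rw [this]
        have hCa : (C a : A[X]) ∈ M₀ := by
          have h1 := Subalgebra.algebraMap_mem R₀ a
          rw [algebraMap_eq] at h1
          have h2 := Subalgebra.algebraMap_mem M₀ (⟨C a, h1⟩ : R₀)
          exact h2
        exact M₀.mul_mem hCa ih
  have hclaim : ∀ (k : ℕ) (γ : A), γ ∈ K ^ k → (C γ * X ^ k : A[X]) ∈ M₀ := by
    intro k
    induction k with
    | zero =>
        intro γ _
        simp only [pow_zero, mul_one]
        have h1 := Subalgebra.algebraMap_mem R₀ γ
        rw [algebraMap_eq] at h1
        exact Subalgebra.algebraMap_mem M₀ (⟨C γ, h1⟩ : R₀)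
    | succ m ih =>
        intro γ hγ
        rw [pow_succ] at hγ
        refine Submodule.mul_induction_on (C := fun γ => (C γ * X ^ (m + 1) : A[X]) ∈ M₀) hγ
          (fun x hx y hy => ?_) (fun x y hx hy => ?_)
        · show (C (x * y) * X ^ (m + 1) : A[X]) ∈ M₀
          have h2 : (C (x * y) * X ^ (m + 1) : A[X]) = (C x * X ^ m) * (C y * X) := by
            rw [C_mul]; ring
          rw [h2]
          exact M₀.mul_mem (ih x hx) (hCX y hy)
        · show (C (x + y) * X ^ (m + 1) : A[X]) ∈ M₀
          have h2 : (C (x + y) * X ^ (m + 1) : A[X]) = C x * X ^ (m+1) + C y * X ^ (m+1) := by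
            rw [C_add, add_mul]
          rw [h2]; exact M₀.add_mem hx hy
  refine ⟨n, ?_⟩
  intro γ hγ
  have h1 : (C γ * X ^ (n + 1) : A[X]) ∈ Submodule.span R₀ (T : Set A[X]) := by
    rw [hT]; exact hclaim (n + 1) γ hγ
  obtain ⟨φ, -, hφ⟩ := Submodule.mem_span_finset.mp h1
  have hTrees : ∀ σ ∈ T, σ ∈ reesAlgebra K := by
    intro σ hσ
    apply hM₀rees
    have : σ ∈ Submodule.span R₀ (T : Set A[X]) := Submodule.subset_span hσ
    rw [hT] at this
    exact this
  have hdeg : ∀ σ ∈ T, σ.natDegree ≤ n := fun σ hσ => Finset.le_sup hσ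
  have hcoeff := congrArg (fun r : A[X] => r.coeff (n + 1)) hφ
  simp only [finset_sum_coeff] at hcoeff
  have hrhs : (C γ * X ^ (n + 1) : A[X]).coeff (n + 1) = γ := by
    rw [coeff_C_mul, coeff_X_pow, if_pos rfl, mul_one]
  rw [hrhs] at hcoeff
  rw [← hcoeff]
  apply Ideal.sum_mem
  intro σ hσ
  have hsmul : (φ σ • σ : A[X]) = (φ σ : A[X]) * σ := by
    rw [Subalgebra.smul_def, smul_eq_mul]
  rw [hsmul, coeff_mul]
  apply Ideal.sum_mem
  rintro ⟨a, b⟩ hab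
  have hab' : a + b = n + 1 := Finset.HasAntidiagonal.mem_antidiagonal.mp hab
  rcases Nat.eq_zero_or_pos a with ha0 | hapos
  · have hbn : b = n + 1 := by omega
    have : σ.coeff b = 0 := by
      apply coeff_eq_zero_of_natDegree_lt
      have := hdeg σ hσ
      omega
    simp [this]
  · have hmem1 : ((φ σ : A[X])).coeff a ∈ J ^ a := (φ σ).2 a
    have hmem2 : σ.coeff b ∈ K ^ b := (hTrees σ hσ) b
    have hle : J ^ a * K ^ b ≤ J * K ^ n := by
      have e1 : J ^ a = J * J ^ (a - 1) := by
        conv_lhs => rw [show a = 1 + (a - 1) by omega]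
        rw [pow_add, pow_one]
      rw [e1, mul_assoc]
      apply Ideal.mul_mono le_rfl
      calc J ^ (a - 1) * K ^ b ≤ K ^ (a - 1) * K ^ b :=
            Ideal.mul_mono (Ideal.pow_right_mono (le_icl J) _) le_rfl
        _ = K ^ n := by rw [← pow_add]; congr 1; omega
    exact hle (Ideal.mul_mem_mul hmem1 hmem2)


set_option maxHeartbeats 1000000 in
set_option synthInstance.maxHeartbeats 1000000 in
lemma machine [IsNoetherianRing A] (J : Ideal A) (q₀ : A) (t : Finset A)
    (hmem : q₀ ∈ Ideal.span (t : Set A))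
    (hrel : ∀ g ∈ t, ∃ u ∈ icl J, ∃ v ∈ icl J, q₀ * g = u * q₀ + v * g) :
    q₀ ∈ icl J := by
  classical
  set K := icl J with hK
  set R₁ := reesAlgebra K with hR₁
  set Q₀ : A[X] := C q₀ * X with hQ₀
  set gens : Set A[X] := insert 1 ((fun g => C g * X) '' (t : Set A)) with hgens
  set E : Submodule R₁ A[X] := Submodule.span R₁ gens with hE
  have h1E : (1 : A[X]) ∈ E := Submodule.subset_span (Set.mem_insert _ _)
  have hgE : ∀ g ∈ t, (C g * X : A[X]) ∈ E := fun g hg =>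
    Submodule.subset_span (Set.mem_insert_iff.mpr (Or.inr ⟨g, hg, rfl⟩))
  have hCmul : ∀ (a : A) (w : A[X]), w ∈ E → C a * w ∈ E := by
    intro a w hw
    have hmem' : (C a : A[X]) ∈ R₁ := by
      have := Subalgebra.algebraMap_mem R₁ a
      rwa [algebraMap_eq] at this
    have : C a * w = (⟨C a, hmem'⟩ : R₁) • w := by
      rw [Subalgebra.smul_def, smul_eq_mul]
    rw [this]
    exact E.smul_mem _ hw
  have hKmul : ∀ u ∈ K, ∀ w ∈ E, (C u * X) * w ∈ E := by
    intro u hu w hw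
    have hmem' : (C u * X : A[X]) ∈ R₁ := CX_mem_rees hu
    have : (C u * X) * w = (⟨C u * X, hmem'⟩ : R₁) • w := by
      rw [Subalgebra.smul_def, smul_eq_mul]
    rw [this]
    exact E.smul_mem _ hw
  have hQ₀E : Q₀ ∈ E := by
    have : ∀ z ∈ Ideal.span (t : Set A), (C z * X : A[X]) ∈ E := by
      intro z hz
      induction hz using Submodule.span_induction with
      | mem x hx => exact hgE x hx
      | zero => simpa using E.zero_mem
      | add x y hx hy ihx ihy =>
          have : (C (x + y) * X : A[X]) = C x * X + C y * X := by rw [C_add, add_mul]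
          rw [this]; exact E.add_mem ihx ihy
      | smul a x hx ih =>
          have : (C (a • x) * X : A[X]) = C a * (C x * X) := by
            rw [smul_eq_mul, C_mul, mul_assoc]
          rw [this]; exact hCmul a _ ih
    exact this q₀ hmem
  have hstab : ∀ e ∈ E, Q₀ * e ∈ E := by
    intro e he
    induction he using Submodule.span_induction with
    | mem x hx =>
        rcases Set.mem_insert_iff.mp hx with h1 | h2
        · rw [h1, mul_one]; exact hQ₀E
        · obtain ⟨g, hg, rfl⟩ := h2
          obtain ⟨u, hu, v, hv, huv⟩ := hrel g hg
          have key : Q₀ * (C g * X) = (C u * X) * Q₀ + (C v * X) * (C g * X) := by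
            have l1 : Q₀ * (C g * X) = C (q₀ * g) * X ^ 2 := by
              rw [hQ₀, C_mul]; ring
            have l2 : (C u * X) * Q₀ + (C v * X) * (C g * X)
                = C (u * q₀ + v * g) * X ^ 2 := by
              rw [hQ₀, C_add, C_mul, C_mul]; ring
            rw [l1, l2, huv]
          rw [key]
          exact E.add_mem (hKmul u hu _ hQ₀E) (hKmul v hv _ (hgE g hg))
    | zero => simpa using E.zero_mem
    | add x y hx hy ihx ihy => rw [mul_add]; exact E.add_mem ihx ihy
    | smul a x hx ih =>
        have : Q₀ * (a • x) = a • (Q₀ * x) := by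
          rw [Subalgebra.smul_def, smul_eq_mul, Subalgebra.smul_def, smul_eq_mul]; ring
        rw [this]
        exact E.smul_mem _ ih
  have hpow : ∀ k : ℕ, Q₀ ^ k ∈ E := by
    intro k
    induction k with
    | zero => simpa using h1E
    | succ n ih =>
        have : Q₀ ^ (n + 1) = Q₀ * Q₀ ^ n := by ring
        rw [this]; exact hstab _ ih
  set S := Algebra.adjoin R₁ ({Q₀} : Set A[X]) with hS
  have hS_le : Subalgebra.toSubmodule S ≤ E := by
    intro y hy
    have hy' : y ∈ Algebra.adjoin R₁ ({Q₀} : Set A[X]) := hy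
    rw [Algebra.adjoin_singleton_eq_range_aeval] at hy'
    obtain ⟨p, rfl⟩ := hy'
    show (aeval Q₀) p ∈ E
    rw [aeval_eq_sum_range]
    exact Submodule.sum_mem _ fun i _ => E.smul_mem _ (hpow i)
  have hEfg : E.FG := Submodule.fg_span (Set.Finite.insert _ (t.finite_toSet.image _))
  haveI : IsNoetherian R₁ E := isNoetherian_of_fg_of_noetherian E hEfg
  have hSfg : (Subalgebra.toSubmodule S).FG := by
    have h1 : (Submodule.comap E.subtype (Subalgebra.toSubmodule S)).FG :=
      IsNoetherian.noetherian _
    have h2 : Submodule.map E.subtype (Submodule.comap E.subtype (Subalgebra.toSubmodule S))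
        = Subalgebra.toSubmodule S := by
      rw [Submodule.map_comap_subtype]
      exact inf_eq_right.mpr hS_le
    exact h2 ▸ h1.map E.subtype
  have hint : IsIntegral R₁ Q₀ :=
    IsIntegral.of_mem_of_fg S hSfg Q₀ (Algebra.self_mem_adjoin_singleton R₁ Q₀)
  exact icl_closed hint


set_option maxHeartbeats 1000000 in
set_option synthInstance.maxHeartbeats 1000000 in
lemma colon_capture [IsNoetherianRing A] [IsLocalRing A] (I : Ideal A) (hnt : I ≠ ⊤)
    (hht : ∀ P ∈ minimalPrimes A, ¬ I ≤ P) {w : A}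
    (hw : ∀ y ∈ maximalIdeal A, w * y ∈ icl (maximalIdeal A * I)) :
    (C w * X : A[X]) ∈ integralClosure (reesAlgebra I) A[X] := by
  classical
  set m := maximalIdeal A with hm
  set J := m * I with hJ
  set K := icl J with hK
  obtain ⟨n, hred⟩ := reduction J
  set N : Ideal A := m * K ^ n with hN
  haveI : Module.Finite A N := Module.Finite.iff_fg.mpr (IsNoetherian.noetherian N)
  set f : Module.End A N := algebraMap A (Module.End A N) w with hfdef
  have hkey : ∀ t ∈ N, w * t ∈ I * N := by
    have hle : K ^ (n + 1) ≤ I * N := by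
      refine le_trans hred (le_of_eq ?_)
      show (m * I) * K ^ n = I * (m * K ^ n)
      ring
    intro t ht
    refine Submodule.mul_induction_on (C := fun t => w * t ∈ I * N) ht
      (fun a ha b hb => ?_) (fun x y hx hy => ?_)
    · show w * (a * b) ∈ I * N
      have h1 : w * a ∈ K := hw a ha
      have h2 : (w * a) * b ∈ K ^ (n + 1) := by
        rw [pow_succ']
        exact Ideal.mul_mem_mul h1 hb
      have : w * (a * b) = (w * a) * b := by ring
      rw [this]
      exact hle h2
    · show w * (x + y) ∈ I * N
      rw [mul_add]
      exact Ideal.add_mem _ hx hy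
  have hrange : LinearMap.range f ≤ I • (⊤ : Submodule A N) := by
    rintro y ⟨x, rfl⟩
    have h1 : w * (x : A) ∈ I * N := hkey _ x.2
    have h2 : Submodule.map N.subtype (I • (⊤ : Submodule A N)) = I * N := by
      rw [Submodule.map_smul'', Submodule.map_subtype_top, Ideal.smul_eq_mul]
    rw [← h2] at h1
    obtain ⟨z, hz, hze⟩ := h1
    have hzz : f x = z := by
      have hfx : ((f x : N) : A) = w * (x : A) := by
        simp only [hfdef, Module.algebraMap_end_apply]
        rfl
      apply Subtype.ext
      rw [hfx, ← hze]
      rfl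
    rw [hzz]
    exact hz
  obtain ⟨p, hpmon, -, hpcoeff, hpev⟩ :=
    LinearMap.exists_monic_and_coeff_mem_pow_and_aeval_eq_zero_of_range_le_smul A f I hrange
  set u := p.eval w with hu
  have hann : ∀ t ∈ N, u * t = 0 := by
    intro t ht
    have h1 : Polynomial.aeval f p = algebraMap A (Module.End A N) u := by
      rw [hfdef, aeval_algebraMap_apply]
      exact congrArg _ (congrFun (coe_aeval_eq_eval w) p)
    have h2 : algebraMap A (Module.End A N) u = 0 := by rw [← h1, hpev]
    have h3 := congrFun (congrArg (fun (g : Module.End A N) => g.toFun) h2) ⟨t, ht⟩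
    have h4 : (u • (⟨t, ht⟩ : N) : N) = 0 := h3
    have h5 := congrArg (fun (y : N) => (y : A)) h4
    simpa using h5
  have hnil : IsNilpotent u := by
    rw [← mem_nilradical, nilradical_eq_sInf]
    rw [Submodule.mem_sInf]
    intro Q hQ
    haveI hQp : Ideal.IsPrime Q := hQ
    obtain ⟨P, hPmem, hPle⟩ := Ideal.exists_minimalPrimes_le (bot_le : (⊥ : Ideal A) ≤ Q)
    have hPmin : P ∈ minimalPrimes A := hPmem
    have hPprime : P.IsPrime := hPmem.1.1
    apply hPle
    -- show u ∈ P
    have hmP : ¬ m ≤ P := by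
      intro hle
      have hPm : m = P := (maximalIdeal.isMaximal A).eq_of_le hPprime.ne_top hle
      exact hht P hPmin (hPm ▸ le_maximalIdeal hnt)
    have hIP : ¬ I ≤ P := hht P hPmin
    obtain ⟨a, ham, haP⟩ := SetLike.not_le_iff_exists.mp hmP
    obtain ⟨i, hiI, hiP⟩ := SetLike.not_le_iff_exists.mp hIP
    have haiJ : a * i ∈ J := Ideal.mul_mem_mul ham hiI
    have haiK : a * i ∈ K := le_icl J haiJ
    have ht : a * (a * i) ^ n ∈ N := Ideal.mul_mem_mul ham (Ideal.pow_mem_pow haiK n)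
    have h0 : u * (a * (a * i) ^ n) = 0 := hann _ ht
    have htP : a * (a * i) ^ n ∉ P := by
      intro hc
      rcases hPprime.mem_or_mem hc with h | h
      · exact haP h
      · rcases hPprime.mem_or_mem (hPprime.mem_of_pow_mem _ h) with h' | h'
        · exact haP h'
        · exact hiP h'
    have : u * (a * (a * i) ^ n) ∈ P := by rw [h0]; exact P.zero_mem
    rcases hPprime.mem_or_mem this with h | h
    · exact h
    · exact absurd h htP
  obtain ⟨e, he⟩ := hnil
  -- build the monic annihilating polynomial of C w * X over reesAlgebra I
  set N₀ := p.natDegree with hN₀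
  have memo : ∀ k, (monomial (N₀ - k) (p.coeff k) : A[X]) ∈ reesAlgebra I :=
    fun k => reesAlgebra.monomial_mem.mpr (hpcoeff k)
  set P₁ : Polynomial (reesAlgebra I) :=
    ∑ k ∈ Finset.range (N₀ + 1),
      Polynomial.C (⟨monomial (N₀ - k) (p.coeff k), memo k⟩ : reesAlgebra I) * X ^ k with hP₁
  haveI : Nontrivial (reesAlgebra I) := by
    refine ⟨⟨0, 1, fun hc => ?_⟩⟩
    have := congrArg (fun (y : reesAlgebra I) => (y : A[X])) hc
    simpa using this
  have hcoeffP₁ : ∀ k ≤ N₀, P₁.coeff k = ⟨monomial (N₀ - k) (p.coeff k), memo k⟩ := by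
    intro k hk
    rw [hP₁, finset_sum_coeff]
    rw [Finset.sum_eq_single k]
    · rw [coeff_C_mul, coeff_X_pow, if_pos rfl, mul_one]
    · intro j hj hjk
      rw [coeff_C_mul, coeff_X_pow, if_neg (fun hc => hjk hc.symm), mul_zero]
    · intro hc
      exact absurd (Finset.mem_range.mpr (Nat.lt_succ_of_le hk)) hc
  have hdegP₁ : P₁.natDegree ≤ N₀ := by
    rw [hP₁]
    refine le_trans (Polynomial.natDegree_sum_le _ _) ?_
    rw [Finset.fold_max_le]
    refine ⟨Nat.zero_le _, fun k hk => ?_⟩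
    refine le_trans (Polynomial.natDegree_mul_le) ?_
    simp only [Polynomial.natDegree_C, zero_add]
    exact le_trans (Polynomial.natDegree_X_pow_le k) (Nat.lt_succ_iff.mp (Finset.mem_range.mp hk))
  have hP₁monic : P₁.Monic := by
    apply Polynomial.monic_of_natDegree_le_of_coeff_eq_one N₀ hdegP₁
    rw [hcoeffP₁ N₀ le_rfl]
    apply Subtype.ext
    show (monomial (N₀ - N₀) (p.coeff N₀) : A[X]) = 1
    rw [Nat.sub_self, hpmon.coeff_natDegree, monomial_zero_one]
  have hevP₁ : eval₂ (algebraMap (reesAlgebra I) A[X]) (C w * X) P₁ = C u * X ^ N₀ := by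
    rw [hP₁]
    rw [Polynomial.eval₂_finset_sum]
    have hterm : ∀ k ∈ Finset.range (N₀ + 1),
        eval₂ (algebraMap (reesAlgebra I) A[X]) (C w * X)
          (Polynomial.C (⟨monomial (N₀ - k) (p.coeff k), memo k⟩ : reesAlgebra I) * X ^ k)
        = C (p.coeff k * w ^ k) * X ^ N₀ := by
      intro k hk
      have hkN : k ≤ N₀ := Nat.lt_succ_iff.mp (Finset.mem_range.mp hk)
      rw [eval₂_mul, eval₂_C, eval₂_X_pow]
      have h1 : (algebraMap (reesAlgebra I) A[X]) (⟨monomial (N₀ - k) (p.coeff k), memo k⟩)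
          = (monomial (N₀ - k) (p.coeff k) : A[X]) := rfl
      rw [h1, ← C_mul_X_pow_eq_monomial, mul_pow, ← C_pow]
      have : C (p.coeff k) * X ^ (N₀ - k) * (C (w ^ k) * X ^ k)
          = C (p.coeff k * w ^ k) * (X ^ (N₀ - k) * X ^ k) := by
        rw [C_mul]; ring
      rw [this, ← pow_add]
      congr 2
      omega
    rw [Finset.sum_congr rfl hterm, ← Finset.sum_mul, ← map_sum C _ _, ← eval_eq_sum_range]
  show IsIntegral (reesAlgebra I) (C w * X : A[X])
  refine ⟨P₁ ^ e, hP₁monic.pow e, ?_⟩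
  have h6 : eval₂ (algebraMap (reesAlgebra I) A[X]) (C w * X) (P₁ ^ e)
      = (eval₂ (algebraMap (reesAlgebra I) A[X]) (C w * X) P₁) ^ e := by
    rw [← coe_eval₂RingHom]
    exact map_pow _ _ _
  rw [h6, hevP₁, mul_pow, ← C_pow, he, map_zero, zero_mul]



lemma units_family [CommRing A] [IsLocalRing A] : ∃ c : ResidueField A → A,
    ∀ κ κ' : ResidueField A, κ ≠ κ' → IsUnit (c κ - c κ') := by
  have hsurj := residue_surjective (R := A)
  choose c hc using fun κ => hsurj κ
  refine ⟨c, fun κ κ' hne => ?_⟩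
  by_contra hc'
  have hmem : c κ - c κ' ∈ maximalIdeal A := by
    rw [mem_maximalIdeal]
    exact mem_nonunits_iff.mpr hc'
  have h0 : residue A (c κ - c κ') = 0 := Ideal.Quotient.eq_zero_iff_mem.mpr hmem
  rw [map_sub, hc, hc] at h0
  exact hne (by rwa [sub_eq_zero] at h0)

set_option maxHeartbeats 1000000 in
set_option synthInstance.maxHeartbeats 1000000 in
lemma descent [IsNoetherianRing A] [IsLocalRing A] [Infinite (ResidueField A)]
    (J : Ideal A) (L : List A)
    (hbad : ∀ x ∈ Ideal.span {b : A | b ∈ L}, ∃ z, z * x ∈ icl J ∧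
      ¬ (∀ y ∈ Ideal.span {b : A | b ∈ L}, z * y ∈ icl J)) : False := by
  classical
  induction L with
  | nil =>
      obtain ⟨z, _, hz2⟩ := hbad 0 (Submodule.zero_mem _)
      apply hz2
      intro y hy
      have hy0 : y = 0 := by
        have hset : {b : A | b ∈ ([] : List A)} = (∅ : Set A) := by
          ext b; simp
        rw [hset, Ideal.span_empty] at hy
        simpa using hy
      rw [hy0, mul_zero]
      exact (icl J).zero_mem
  | cons a L ih =>
      apply ih
      intro x hx
      set K := icl J with hK
      set SL := Ideal.span {b : A | b ∈ L} with hSL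
      set SC := Ideal.span {b : A | b ∈ a :: L} with hSC
      have hset : {b : A | b ∈ a :: L} = insert a {b : A | b ∈ L} := by
        ext b; simp [List.mem_cons]
      have hLle : SL ≤ SC := Ideal.span_mono (by rw [hset]; exact Set.subset_insert _ _)
      have haSC : a ∈ SC := Ideal.subset_span (by simp)
      have hdecomp : ∀ y ∈ SC, ∃ r : A, ∃ w ∈ SL, y = r * a + w := by
        intro y hy
        rw [hSC, hset, Ideal.mem_span_insert] at hy
        obtain ⟨r, ww, hww, hy⟩ := hy
        exact ⟨r, ww, hww, hy⟩
      obtain ⟨c, hc⟩ := units_family (A := A)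
      have hmem : ∀ κ : ResidueField A, x + c κ * a ∈ SC :=
        fun κ => SC.add_mem (hLle hx) (Ideal.mul_mem_left _ _ haSC)
      choose z hz1 hz2 using fun κ => hbad (x + c κ * a) (hmem κ)
      by_cases hcase : ∃ κ, z κ * a ∈ K
      · obtain ⟨κ, hκ⟩ := hcase
        refine ⟨z κ, ?_, ?_⟩
        · have hrw : z κ * x = z κ * (x + c κ * a) - c κ * (z κ * a) := by ring
          rw [hrw]
          exact K.sub_mem (hz1 κ) (K.mul_mem_left _ hκ)
        · intro hall
          apply hz2 κ
          intro y hy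
          obtain ⟨r, w, hw, rfl⟩ := hdecomp y hy
          have hrw : z κ * (r * a + w) = r * (z κ * a) + z κ * w := by ring
          rw [hrw]
          exact K.add_mem (K.mul_mem_left _ hκ) (hall w hw)
      · exfalso
        push_neg at hcase
        set q : ResidueField A → A := fun κ => z κ * a with hq
        have hfg : (Ideal.span (Set.range q)).FG := IsNoetherian.noetherian _
        obtain ⟨F, hF⟩ := hfg
        have hmemF : ∀ f : F, (f : A) ∈ Ideal.span (Set.range q) := by
          intro f
          rw [← hF]
          exact Ideal.subset_span f.2
        choose Tf hTf1 hTf2 using fun f : F => Submodule.mem_span_finite_of_mem_span (hmemF f)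
        set G : Finset A := F.attach.biUnion (fun f => Tf f) with hG
        have hG1 : (G : Set A) ⊆ Set.range q := by
          intro g hg
          simp only [hG, Finset.coe_biUnion, Set.mem_iUnion, Finset.mem_coe] at hg
          obtain ⟨f, _, hf⟩ := hg
          exact hTf1 f hf
        have hspanG : Ideal.span (Set.range q) ≤ Ideal.span (G : Set A) := by
          rw [← hF, Ideal.span_le]
          intro f hf
          have hf' : f ∈ F := hf
          have hsub : ((Tf ⟨f, hf'⟩ : Finset A) : Set A) ⊆ (G : Set A) := by
            intro y hy
            have hy' : y ∈ Tf ⟨f, hf'⟩ := hy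
            exact Finset.mem_coe.mpr
              (Finset.mem_biUnion.mpr ⟨⟨f, hf'⟩, Finset.mem_attach _ _, hy'⟩)
          exact Submodule.span_mono hsub (hTf2 ⟨f, hf'⟩)
        have hGr : ∀ g ∈ G, ∃ κ, q κ = g := fun g hg => hG1 hg
        choose! κof hκof using hGr
        set S : Finset (ResidueField A) := G.image κof with hS
        obtain ⟨κ₀, hκ₀⟩ := Infinite.exists_notMem_finset S
        have hq₀G : q κ₀ ∈ Ideal.span (G : Set A) :=
          hspanG (Ideal.subset_span (Set.mem_range_self κ₀))
        have hrel : ∀ g ∈ G, ∃ u ∈ icl J, ∃ v ∈ icl J, q κ₀ * g = u * q κ₀ + v * g := by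
          intro g hg
          have hκg : κof g ∈ S := Finset.mem_image_of_mem κof hg
          have hne : κof g ≠ κ₀ := fun hc' => hκ₀ (hc' ▸ hκg)
          set κ := κof g with hκdef
          have hgq : q κ = g := hκof g hg
          have hd : IsUnit (c κ - c κ₀) := hc κ κ₀ hne
          obtain ⟨dd, hdd⟩ := hd
          set d : A := c κ - c κ₀ with hddef
          have hid : d * (d * (q κ₀ * q κ)) =
              d * ((z κ * (x + c κ * a)) * q κ₀ - (z κ₀ * (x + c κ₀ * a)) * q κ) := by
            simp only [hq]
            ring
          have hcancel : d * (q κ₀ * q κ) =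
              (z κ * (x + c κ * a)) * q κ₀ - (z κ₀ * (x + c κ₀ * a)) * q κ := by
            have hdu : IsUnit d := hdd ▸ dd.isUnit
            exact hdu.mul_left_cancel hid
          have hinv : q κ₀ * q κ =
              ((dd⁻¹ : Aˣ) : A) * ((z κ * (x + c κ * a)) * q κ₀ - (z κ₀ * (x + c κ₀ * a)) * q κ) := by
            rw [← hcancel, ← hdd, Units.inv_mul_cancel_left]
          refine ⟨((dd⁻¹ : Aˣ) : A) * (z κ * (x + c κ * a)), K.mul_mem_left _ (hz1 κ),
            -(((dd⁻¹ : Aˣ) : A) * (z κ₀ * (x + c κ₀ * a))), K.neg_mem (K.mul_mem_left _ (hz1 κ₀)),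
            ?_⟩
          rw [← hgq, hinv]
          ring
        have hq₀K : q κ₀ ∈ icl J := machine J (q κ₀) G hq₀G hrel
        exact hcase κ₀ hq₀K


end ReesMfull

open ReesMfull Polynomial

/-- An integrally closed ideal of positive height in a Noetherian local ring with
infinite residue field is `m`-full. -/
theorem stmt2 {A : Type*} [CommRing A] [IsNoetherianRing A] [IsLocalRing A]
    [Infinite (ResidueField A)]
    (I : Ideal A) (hic : idealIntegralClosure I = (I : Set A))
    (hht : ∀ P ∈ minimalPrimes A, ¬ I ≤ P) :
    ∃ x ∈ maximalIdeal A, (maximalIdeal A * I).colon (Ideal.span {x}) = I := by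
  classical
  by_cases hI : I = ⊤
  · refine ⟨0, Ideal.zero_mem _, ?_⟩
    rw [hI]
    apply eq_top_iff.mpr
    intro b _
    rw [Submodule.mem_colon]
    intro p hp
    have hp0 : p = 0 := by
      rw [show (Ideal.span {(0 : A)}) = ⊥ from Ideal.span_singleton_eq_bot.mpr rfl] at hp
      simpa using hp
    rw [hp0, smul_zero]
    exact Ideal.zero_mem _
  · by_contra hcon
    push_neg at hcon
    obtain ⟨s, hs⟩ : (maximalIdeal A).FG := IsNoetherian.noetherian _
    have hset : {b : A | b ∈ s.toList} = (s : Set A) := by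
      ext b; simp [Finset.mem_toList]
    have hspan : Ideal.span {b : A | b ∈ s.toList} = maximalIdeal A := by
      rw [hset, hs]
    apply descent (maximalIdeal A * I) s.toList
    intro x hx
    have hxm : x ∈ maximalIdeal A := by rwa [hspan] at hx
    have hne := hcon x hxm
    have hIle : I ≤ (maximalIdeal A * I).colon (Ideal.span {x}) := by
      intro w hw
      rw [Ideal.mem_colon_span_singleton, mul_comm w x]
      exact Ideal.mul_mem_mul hxm hw
    have hlt : I < (maximalIdeal A * I).colon (Ideal.span {x}) :=
      lt_of_le_of_ne hIle (Ne.symm hne)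
    obtain ⟨w, hwc, hwnot⟩ := SetLike.exists_of_lt hlt
    refine ⟨w, ?_, ?_⟩
    · exact le_icl _ (Ideal.mem_colon_span_singleton.mp hwc)
    · intro hall
      apply hwnot
      have hall' : ∀ y ∈ maximalIdeal A, w * y ∈ icl (maximalIdeal A * I) := by
        intro y hy
        exact hall y (by rwa [hspan])
      have h1 := colon_capture I hI hht hall'
      have h2 : w ∈ idealIntegralClosure I := extraction h1
      rw [hic] at h2
      exact h2
end

section
/- Let (A, m) be a Noetherian local ring whose associated graded ring G = ⊕_{n≥0} m^n/m^{n+1} has depth 0. Then there exists ℓ ≥ 1 and an ideal J ⊋ m^{ℓ+1} with μ(J) > μ(m^{ℓ+1}); i.e., some power of m fails the Rees property. Concretely, there exist ℓ ≥ 1 and z ∈ m^ℓ \ m^{ℓ+1} with mz ⊆ m^{ℓ+2}, and for J = (z) + m^{ℓ+1} one has μ(J) = μ(m^{ℓ+1}) + 1. -/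
open IsLocalRing Polynomial

set_option maxHeartbeats 2000000
set_option synthInstance.maxHeartbeats 1000000

section AssFin

variable {B : Type*} [CommRing B]

lemma ass_or [IsNoetherianRing B] {M : Type*} [AddCommGroup M] [Module B M] {P : Ideal B}
    (hP : IsAssociatedPrime P M) (N : Submodule B M) :
    IsAssociatedPrime P N ∨ IsAssociatedPrime P (M ⧸ N) := by
  obtain ⟨hprime, x, hx⟩ := isAssociatedPrime_iff.mp hP
  have hmem : ∀ t : B, t ∈ P ↔ t • x = 0 := fun t => by
    rw [hx, Submodule.mem_colon_singleton, Submodule.mem_bot]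
  by_cases h : ∀ r : B, r • x ∈ N → r • x = 0
  · right
    refine isAssociatedPrime_iff.mpr ⟨hprime, Submodule.Quotient.mk x, ?_⟩
    ext r
    rw [Submodule.mem_colon_singleton, Submodule.mem_bot, ← Submodule.Quotient.mk_smul,
      Submodule.Quotient.mk_eq_zero, hmem r]
    exact ⟨fun h0 => h0 ▸ N.zero_mem, h r⟩
  · push_neg at h
    obtain ⟨r, hrN, hr0⟩ := h
    left
    refine isAssociatedPrime_iff.mpr ⟨hprime, ⟨r • x, hrN⟩, ?_⟩
    ext s
    rw [Submodule.mem_colon_singleton, Submodule.mem_bot]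
    constructor
    · intro hs
      have hs' : s • x = 0 := (hmem s).mp hs
      ext
      show s • (r • x) = 0
      rw [smul_comm, hs', smul_zero]
    · intro hs
      have : s • (r • x) = 0 := by
        have := congrArg (Subtype.val) hs
        simpa using this
      rw [smul_smul] at this
      have hsr : s * r ∈ P := (hmem _).mpr this
      rcases hprime.mem_or_mem hsr with h1 | h1
      · exact h1
      · exact absurd ((hmem r).mp h1) hr0

lemma assFinQuot [IsNoetherianRing B] (I : Ideal B) :
    (associatedPrimes B (B ⧸ I)).Finite := by
  induction I using IsNoetherian.induction with
  | _ I ih =>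
    by_cases hI : I = ⊤
    · haveI : Subsingleton (B ⧸ I) :=
        Submodule.Quotient.subsingleton_iff.mpr hI
      rw [associatedPrimes.eq_empty_of_subsingleton]
      exact Set.finite_empty
    · haveI := Ideal.Quotient.nontrivial_iff.mpr hI
      obtain ⟨p, hp⟩ := associatedPrimes.nonempty B (B ⧸ I)
      obtain ⟨hpr, ξ, hξ⟩ := isAssociatedPrime_iff.mp hp
      have hξ0 : ξ ≠ 0 := by
        rintro rfl
        exact hpr.ne_top (by
          rw [hξ]; ext r; simp)
      obtain ⟨x, rfl⟩ := Submodule.Quotient.mk_surjective I ξ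
      set N : Submodule B (B ⧸ I) := Submodule.span B {Submodule.Quotient.mk x} with hN
      set J : Ideal B := N.comap I.mkQ with hJ
      have hIJ : I < J := by
        constructor
        · intro a ha
          show I.mkQ a ∈ N
          have : I.mkQ a = 0 := (Submodule.Quotient.mk_eq_zero I).mpr ha
          rw [this]; exact N.zero_mem
        · intro hle
          have hxJ : x ∈ J := by
            show I.mkQ x ∈ N
            exact Submodule.mem_span_singleton_self _
          have hxI : x ∈ I := hle hxJ
          exact hξ0 ((Submodule.Quotient.mk_eq_zero I).mpr hxI)
      have hmap : Submodule.map I.mkQ J = N := by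
        rw [hJ, Submodule.map_comap_eq, Submodule.range_mkQ, top_inf_eq]
      -- Ass N = {p}
      set f := LinearMap.toSpanSingleton B (B ⧸ I) (Submodule.Quotient.mk x) with hf
      have hker : LinearMap.ker f = p := by
        ext r
        simp only [LinearMap.mem_ker, hf, LinearMap.toSpanSingleton_apply, hξ,
          Submodule.mem_colon_singleton, Submodule.mem_bot]
      have hAssN : associatedPrimes B N = {p.radical} := by
        have ea : (B ⧸ p) ≃ₗ[B] (B ⧸ LinearMap.ker f) :=
          Submodule.quotEquivOfEq p (LinearMap.ker f) hker.symm
        have eb : (B ⧸ LinearMap.ker f) ≃ₗ[B] LinearMap.range f := f.quotKerEquivRange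
        have ec : (LinearMap.range f : Submodule B (B ⧸ I)) ≃ₗ[B] N := by
          refine LinearEquiv.ofEq _ _ ?_
          rw [hN, hf, ← LinearMap.span_singleton_eq_range]
        have e1 : (B ⧸ p) ≃ₗ[B] N := ea.trans (eb.trans ec)
        rw [← LinearEquiv.AssociatedPrimes.eq e1,
          associatedPrimes.eq_singleton_of_isPrimary hpr.isPrimary]
      have hAssQ : associatedPrimes B ((B ⧸ I) ⧸ N) = associatedPrimes B (B ⧸ J) := by
        have e2a : ((B ⧸ I) ⧸ N) ≃ₗ[B] ((B ⧸ I) ⧸ (Submodule.map I.mkQ J)) :=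
          Submodule.quotEquivOfEq N (Submodule.map I.mkQ J) hmap.symm
        have e2b : ((B ⧸ I) ⧸ (Submodule.map I.mkQ J)) ≃ₗ[B] (B ⧸ J) :=
          Submodule.quotientQuotientEquivQuotient I J hIJ.le
        have e2 : ((B ⧸ I) ⧸ N) ≃ₗ[B] B ⧸ J := e2a.trans e2b
        exact LinearEquiv.AssociatedPrimes.eq e2
      have hsub : associatedPrimes B (B ⧸ I) ⊆ {p.radical} ∪ associatedPrimes B (B ⧸ J) := by
        intro q hq
        rcases ass_or hq N with h1 | h1
        · exact Or.inl (by rw [← hAssN]; exact h1)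
        · exact Or.inr (by rw [← hAssQ]; exact h1)
      exact Set.Finite.subset ((Set.finite_singleton _).union (ih J hIJ)) hsub

lemma assFin [IsNoetherianRing B] : (associatedPrimes B B).Finite := by
  have e : (B ⧸ (⊥ : Ideal B)) ≃ₗ[B] B := Submodule.quotEquivOfEqBot ⊥ rfl
  rw [← LinearEquiv.AssociatedPrimes.eq e]
  exact assFinQuot ⊥

end AssFin

section Avoid

variable {B : Type*} [CommRing B] (D : B → ℕ → Prop)

lemma Dpow (Dmul : ∀ {x y n s}, D x n → D y s → D (x * y) (n + s)) :
    ∀ (k : ℕ), 1 ≤ k → ∀ {x n}, D x n → D (x ^ k) (k * n) := by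
  intro k
  induction k with
  | zero => omega
  | succ k ihk =>
    intro _ x n hx
    by_cases hk : k = 0
    · subst hk; simpa using hx
    · have h2 := Dmul (ihk (by omega) hx) hx
      rw [← pow_succ x k] at h2
      have h3 : k * n + n = (k + 1) * n := by ring
      rwa [h3] at h2

lemma Dprod (Dmul : ∀ {x y n s}, D x n → D y s → D (x * y) (n + s))
    {ι : Type*} (E : Finset ι) (hE : E.Nonempty) (f : ι → B) (d : ι → ℕ)
    (h : ∀ p ∈ E, D (f p) (d p)) : D (∏ p ∈ E, f p) (∑ p ∈ E, d p) := by
  classical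
  induction hE using Finset.Nonempty.cons_induction with
  | singleton a => simpa using h a (by simp)
  | cons a s ha hs ih =>
    rw [Finset.prod_cons, Finset.sum_cons]
    exact Dmul (h a (Finset.mem_cons_self a s)) (ih (fun p hp => h p (Finset.mem_cons_of_mem hp)))

lemma avoidance (Dmul : ∀ {x y n s}, D x n → D y s → D (x * y) (n + s))
    (Dadd : ∀ {x y n}, D x n → D y n → D (x + y) n) :
    ∀ (k : ℕ) (T : Finset (Ideal B)), T.card = k → T.Nonempty →
      (∀ p ∈ T, p.IsPrime) →
      (∀ x n, 1 ≤ n → D x n → ∃ p ∈ T, x ∈ p) →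
      ∃ p ∈ T, ∀ x n, 1 ≤ n → D x n → x ∈ p := by
  classical
  intro k
  induction k using Nat.strong_induction_on with
  | _ k ih =>
    intro T hcard hT hprime hcover
    obtain ⟨p₁, hp₁⟩ := hT
    by_cases h1 : T.card = 1
    · refine ⟨p₁, hp₁, fun x n hn hD => ?_⟩
      obtain ⟨q, hq, hxq⟩ := hcover x n hn hD
      have : q = p₁ := Finset.card_le_one.mp h1.le q hq p₁ hp₁
      exact this ▸ hxq
    · have hk2 : 2 ≤ T.card := by
        have : 0 < T.card := Finset.card_pos.mpr ⟨p₁, hp₁⟩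
        omega
      by_cases hred : ∃ p ∈ T, ∀ x n, 1 ≤ n → D x n → ∃ q ∈ T.erase p, x ∈ q
      · obtain ⟨p, hp, hcov'⟩ := hred
        have hee : (T.erase p).Nonempty := by
          rw [← Finset.card_pos, Finset.card_erase_of_mem hp]
          omega
        obtain ⟨q, hq, hfin⟩ := ih (T.erase p).card
          (by rw [Finset.card_erase_of_mem hp]; omega) (T.erase p) rfl hee
          (fun r hr => hprime r (Finset.mem_of_mem_erase hr)) hcov'
        exact ⟨q, Finset.mem_of_mem_erase hq, hfin⟩
      · push_neg at hred
        exfalso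
        have hred' : ∀ p : {p // p ∈ T}, ∃ x n, 1 ≤ n ∧ D x n ∧ ∀ q ∈ T.erase p.1, x ∉ q :=
          fun p => hred p.1 p.2
        choose x n hn hD hnot using hred'
        have hxin : ∀ p : {p // p ∈ T}, x p ∈ p.1 := by
          intro p
          obtain ⟨q, hq, hxq⟩ := hcover (x p) (n p) (hn p) (hD p)
          by_cases hqp : q = p.1
          · exact hqp ▸ hxq
          · exact absurd hxq (hnot p q (Finset.mem_erase.mpr ⟨hqp, hq⟩))
        set P1 : {p // p ∈ T} := ⟨p₁, hp₁⟩ with hP1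
        set E : Finset {p // p ∈ T} := T.attach.erase P1 with hE
        have hEne : E.Nonempty := by
          rw [← Finset.card_pos, hE, Finset.card_erase_of_mem (Finset.mem_attach _ _),
            Finset.card_attach]
          omega
        set c : ℕ := ∑ p ∈ E, n p with hc
        have hc1 : 1 ≤ c := by
          have : 0 < c := Finset.sum_pos (fun p _ => hn p) hEne
          omega
        set z : B := x P1 ^ c + ∏ p ∈ E, x p ^ (n P1) with hz
        have hDz : D z (c * n P1) := by
          have h1 : D (x P1 ^ c) (c * n P1) := Dpow D Dmul c hc1 (hD P1)
          have h2 : D (∏ p ∈ E, x p ^ (n P1)) (∑ p ∈ E, n P1 * n p) :=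
            Dprod D Dmul E hEne _ _ (fun p _ => Dpow D Dmul (n P1) (hn P1) (hD p))
          rw [← Finset.mul_sum, ← hc, mul_comm (n P1) c] at h2
          exact Dadd h1 h2
        have hpos : 1 ≤ c * n P1 := by
          have := Nat.mul_le_mul hc1 (hn P1); simpa using this
        obtain ⟨q, hq, hzq⟩ := hcover z (c * n P1) hpos hDz
        haveI hqpr : q.IsPrime := hprime q hq
        by_cases hq1 : q = p₁
        · subst hq1
          have h1 : x P1 ^ c ∈ q := Ideal.pow_mem_of_mem q (hxin P1) c (by omega)
          have h2 : (∏ p ∈ E, x p ^ (n P1)) ∈ q := by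
            have := q.sub_mem hzq h1
            rwa [hz, add_sub_cancel_left] at this
          obtain ⟨p, hpE, hpow⟩ := Ideal.IsPrime.prod_mem_iff.mp h2
          have hxp : x p ∈ q := hqpr.mem_of_pow_mem _ hpow
          have hpne : p ≠ P1 := Finset.ne_of_mem_erase hpE
          refine hnot p q ?_ hxp
          refine Finset.mem_erase.mpr ⟨?_, hq⟩
          intro hqq
          exact hpne (Subtype.ext hqq.symm)
        · have hQE : (⟨q, hq⟩ : {p // p ∈ T}) ∈ E := by
            refine Finset.mem_erase.mpr ⟨?_, Finset.mem_attach _ _⟩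
            intro h
            exact hq1 (congrArg Subtype.val h)
          have h2 : (∏ p ∈ E, x p ^ (n P1)) ∈ q := by
            rw [← Finset.mul_prod_erase E _ hQE]
            exact Ideal.mul_mem_right _ _
              (Ideal.pow_mem_of_mem q (hxin ⟨q, hq⟩) _ (by have := hn P1; omega))
          have h1 : x P1 ^ c ∈ q := by
            have := q.sub_mem hzq h2
            rwa [hz, add_sub_cancel_right] at this
          have hx1 : x P1 ∈ q := hqpr.mem_of_pow_mem _ h1
          exact hnot P1 q (Finset.mem_erase.mpr ⟨hq1, hq⟩) hx1

end Avoid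

section Graded

variable (A : Type*) [CommRing A] [IsLocalRing A]

/-- The Rees algebra of the maximal ideal. -/
abbrev RRg : Type _ := reesAlgebra (maximalIdeal A)

/-- The ideal of the Rees algebra whose quotient is the associated graded ring. -/
def NNg : Ideal (RRg A) where
  carrier := {f | ∀ i, (f : A[X]).coeff i ∈ maximalIdeal A ^ (i + 1)}
  add_mem' := by
    intro f g hf hg i
    rw [Subalgebra.coe_add, coeff_add]
    exact Ideal.add_mem _ (hf i) (hg i)
  zero_mem' := by
    intro i
    rw [ZeroMemClass.coe_zero, coeff_zero]
    exact Ideal.zero_mem _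
  smul_mem' := by
    intro c f hf i
    rw [smul_eq_mul]
    show ((c * f : RRg A) : A[X]).coeff i ∈ _
    rw [MulMemClass.coe_mul, coeff_mul]
    apply Ideal.sum_mem
    rintro ⟨j, k⟩ e
    have hj : (c : A[X]).coeff j ∈ maximalIdeal A ^ j := c.2 j
    have hk : (f : A[X]).coeff k ∈ maximalIdeal A ^ (k + 1) := hf k
    have hjk : j + (k + 1) = i + 1 := by
      have := Finset.HasAntidiagonal.mem_antidiagonal.mp e
      omega
    rw [← hjk, pow_add]
    exact Ideal.mul_mem_mul hj hk

lemma mem_NNg_iff {f : RRg A} : f ∈ NNg A ↔ ∀ i, (f : A[X]).coeff i ∈ maximalIdeal A ^ (i + 1) :=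
  Iff.rfl

/-- The associated graded ring. -/
abbrev Gg : Type _ := RRg A ⧸ NNg A

/-- homogeneous element generator -/
noncomputable def hgen (n : ℕ) (z : A) (hz : z ∈ maximalIdeal A ^ n) : RRg A :=
  ⟨monomial n z, reesAlgebra.monomial_mem.mpr hz⟩

lemma hgen_mul {n s : ℕ} {z w : A} (hz : z ∈ maximalIdeal A ^ n) (hw : w ∈ maximalIdeal A ^ s) :
    hgen A n z hz * hgen A s w hw
      = hgen A (n + s) (z * w) (pow_add (maximalIdeal A) n s ▸ Ideal.mul_mem_mul hz hw) := by
  apply Subtype.ext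
  show (monomial n z : A[X]) * monomial s w = monomial (n + s) (z * w)
  rw [monomial_mul_monomial]

lemma hgen_add {n : ℕ} {z w : A} (hz : z ∈ maximalIdeal A ^ n) (hw : w ∈ maximalIdeal A ^ n) :
    hgen A n z hz + hgen A n w hw = hgen A n (z + w) (Ideal.add_mem _ hz hw) := by
  apply Subtype.ext
  show (monomial n z : A[X]) + monomial n w = monomial n (z + w)
  rw [← map_add]

lemma mk_hgen_eq_zero_iff {n : ℕ} {z : A} (hz : z ∈ maximalIdeal A ^ n) :
    Ideal.Quotient.mk (NNg A) (hgen A n z hz) = 0 ↔ z ∈ maximalIdeal A ^ (n + 1) := by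
  rw [Ideal.Quotient.eq_zero_iff_mem]
  constructor
  · intro h
    have := h n
    rw [hgen] at this
    simpa [coeff_monomial] using this
  · intro h i
    show (monomial n z : A[X]).coeff i ∈ _
    rw [coeff_monomial]
    by_cases hni : n = i
    · subst hni; simpa using h
    · simp [hni]

/-- the homogeneity predicate on the associated graded ring -/
def Dg (x : Gg A) (n : ℕ) : Prop :=
  ∃ z, ∃ hz : z ∈ maximalIdeal A ^ n, x = Ideal.Quotient.mk (NNg A) (hgen A n z hz)

lemma Dg_mul {x y : Gg A} {n s : ℕ} (hx : Dg A x n) (hy : Dg A y s) : Dg A (x * y) (n + s) := by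
  obtain ⟨z, hz, rfl⟩ := hx
  obtain ⟨w, hw, rfl⟩ := hy
  exact ⟨z * w, _, by rw [← RingHom.map_mul, hgen_mul]⟩

lemma Dg_add {x y : Gg A} {n : ℕ} (hx : Dg A x n) (hy : Dg A y n) : Dg A (x + y) n := by
  obtain ⟨z, hz, rfl⟩ := hx
  obtain ⟨w, hw, rfl⟩ := hy
  exact ⟨z + w, _, by rw [← RingHom.map_add, hgen_add]⟩

lemma Gg_nontrivial (hA : maximalIdeal A ≠ ⊤) : Nontrivial (Gg A) := by
  refine Ideal.Quotient.nontrivial_iff.mpr ?_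
  intro htop
  have h1 : (1 : RRg A) ∈ NNg A := htop ▸ Submodule.mem_top
  have h0 := h1 0
  rw [OneMemClass.coe_one, coeff_one] at h0
  simp only [if_pos rfl, pow_one] at h0
  exact hA (Ideal.eq_top_of_isUnit_mem _ (by simp only [if_true, zero_add, pow_one] at h0; exact h0) isUnit_one)

end Graded

section Socle

variable {A : Type*} [CommRing A] [IsNoetherianRing A] [IsLocalRing A]

lemma socle_exists
    (hdim : 1 ≤ ringKrullDim A)
    (hdepth : ∀ d : ℕ, 1 ≤ d → ∀ z ∈ maximalIdeal A ^ d,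
      ∃ n : ℕ, ∃ w ∈ maximalIdeal A ^ n,
        w ∉ maximalIdeal A ^ (n + 1) ∧ z * w ∈ maximalIdeal A ^ (n + d + 1)) :
    ∃ ℓ : ℕ, 1 ≤ ℓ ∧ ∃ z ∈ maximalIdeal A ^ ℓ,
      z ∉ maximalIdeal A ^ (ℓ + 1) ∧ (∀ a ∈ maximalIdeal A, a * z ∈ maximalIdeal A ^ (ℓ + 2)) := by
  classical
  haveI : Nontrivial (Gg A) := Gg_nontrivial A (maximalIdeal.isMaximal A).ne_top
  have hfin : (associatedPrimes (Gg A) (Gg A)).Finite := assFin (B := Gg A)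
  set T : Finset (Ideal (Gg A)) := hfin.toFinset with hT
  have hTmem : ∀ p : Ideal (Gg A), p ∈ T ↔ IsAssociatedPrime (R := Gg A) p (Gg A) := fun p => hfin.mem_toFinset
  have hTne : T.Nonempty := by
    obtain ⟨p, hp⟩ := associatedPrimes.nonempty (Gg A) (Gg A)
    exact ⟨p, (hTmem p).mpr hp⟩
  have hprimes : ∀ p ∈ T, p.IsPrime := fun p hp => ((hTmem p).mp hp).isPrime
  have hcover : ∀ x n, 1 ≤ n → Dg A x n → ∃ p ∈ T, x ∈ p := by
    rintro x n hn ⟨z, hz, rfl⟩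
    by_cases h0 : Ideal.Quotient.mk (NNg A) (hgen A n z hz) = 0
    · obtain ⟨q, hq⟩ := hTne
      exact ⟨q, hq, h0 ▸ q.zero_mem⟩
    · obtain ⟨s, w, hw, hw1, hzw⟩ := hdepth n hn z hz
      set y : Gg A := Ideal.Quotient.mk (NNg A) (hgen A s w hw) with hy
      have hy0 : y ≠ 0 := fun h => hw1 ((mk_hgen_eq_zero_iff A hw).mp h)
      have hxy : Ideal.Quotient.mk (NNg A) (hgen A n z hz) * y = 0 := by
        rw [hy, ← RingHom.map_mul, hgen_mul, mk_hgen_eq_zero_iff]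
        have : n + s + 1 = s + n + 1 := by omega
        rw [this]
        exact hzw
      obtain ⟨P, hP, hannP⟩ := exists_le_isAssociatedPrime_of_isNoetherianRing (Gg A) y hy0
      refine ⟨P, (hTmem P).mpr hP, hannP ?_⟩
      rw [Submodule.mem_colon_singleton, Submodule.mem_bot, smul_eq_mul]
      exact hxy
  obtain ⟨p, hpT, hp⟩ := avoidance (Dg A) (fun {x y n s} => Dg_mul A) (fun {x y n} => Dg_add A)
    T.card T rfl hTne hprimes hcover
  obtain ⟨hppr, ξ, hξ⟩ := isAssociatedPrime_iff.mp ((hTmem p).mp hpT)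
  have hξ0 : ξ ≠ 0 := by
    rintro rfl
    exact hppr.ne_top (by
      rw [hξ]; ext r; simp)
  obtain ⟨f, rfl⟩ := Ideal.Quotient.mk_surjective ξ
  have hfN : f ∉ NNg A := fun h => hξ0 (Ideal.Quotient.eq_zero_iff_mem.mpr h)
  have hex : ∃ i, (f : A[X]).coeff i ∉ maximalIdeal A ^ (i + 1) := by
    by_contra h
    push_neg at h
    exact hfN ((mem_NNg_iff A).mpr h)
  obtain ⟨ℓ, hℓ⟩ := hex
  set z : A := (f : A[X]).coeff ℓ with hzdef
  have hz : z ∈ maximalIdeal A ^ ℓ := f.2 ℓ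
  have hsoc : ∀ a ∈ maximalIdeal A, a * z ∈ maximalIdeal A ^ (ℓ + 2) := by
    intro a ha
    have ha1 : a ∈ maximalIdeal A ^ 1 := by rwa [pow_one]
    have hmem : Ideal.Quotient.mk (NNg A) (hgen A 1 a ha1) ∈ p :=
      hp _ 1 le_rfl ⟨a, ha1, rfl⟩
    rw [hξ, Submodule.mem_colon_singleton, Submodule.mem_bot, smul_eq_mul, ← RingHom.map_mul,
      Ideal.Quotient.eq_zero_iff_mem] at hmem
    have h2 := hmem (ℓ + 1)
    have hcoeff : ((hgen A 1 a ha1 * f : RRg A) : A[X]).coeff (ℓ + 1) = a * z := by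
      rw [MulMemClass.coe_mul]
      show ((monomial 1 a : A[X]) * f).coeff (ℓ + 1) = a * z
      rw [← C_mul_X_eq_monomial, mul_assoc, coeff_C_mul, coeff_X_mul]
    rwa [hcoeff] at h2
  have hℓ1 : 1 ≤ ℓ := by
    by_contra h
    have hℓ0 : ℓ = 0 := by omega
    subst hℓ0
    have hzunit : IsUnit z := by
      by_contra hu
      exact hℓ (by rwa [zero_add, pow_one, mem_maximalIdeal])
    obtain ⟨u, hu⟩ := hzunit
    have hmm : maximalIdeal A ≤ maximalIdeal A • maximalIdeal A := by
      intro a ha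
      have h2 : a * z ∈ maximalIdeal A ^ 2 := hsoc a ha
      have h3 : a * z * ↑u⁻¹ ∈ maximalIdeal A ^ 2 := Ideal.mul_mem_right _ _ h2
      have h4 : a * z * ↑u⁻¹ = a := by rw [← hu, Units.mul_inv_cancel_right]
      rw [h4] at h3
      rwa [smul_eq_mul, ← sq]
    have hbot : maximalIdeal A = ⊥ :=
      Submodule.eq_bot_of_le_smul_of_le_jacobson_bot (maximalIdeal A) (maximalIdeal A)
        (IsNoetherian.noetherian _) hmm (IsLocalRing.maximalIdeal_le_jacobson ⊥)
    have hfield : IsField A := IsLocalRing.isField_iff_maximalIdeal_eq.mpr hbot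
    rw [ringKrullDim_eq_zero_of_isField hfield] at hdim
    exact absurd hdim (by decide)
  exact ⟨ℓ, hℓ1, z, hz, hℓ, hsoc⟩

end Socle

section Mu

lemma mu_le {A : Type*} [CommRing A] {I : Ideal A} {s : Finset A}
    (h : Ideal.span (s : Set A) = I) : mu I ≤ s.card :=
  Nat.sInf_le ⟨s, rfl, h⟩

lemma mu_spec {A : Type*} [CommRing A] (I : Ideal A) (hI : I.FG) :
    ∃ s : Finset A, s.card = mu I ∧ Ideal.span (s : Set A) = I := by
  obtain ⟨s, hs⟩ := hI
  have hne : {n | ∃ s : Finset A, s.card = n ∧ Ideal.span (s : Set A) = I}.Nonempty :=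
    ⟨s.card, s, rfl, by rw [← Ideal.submodule_span_eq]; exact hs⟩
  exact Nat.sInf_mem hne

variable {A : Type*} [CommRing A] [IsNoetherianRing A] [IsLocalRing A]

open IsLocalRing

lemma mu_succ {ℓ : ℕ} {z : A} (hz1 : z ∉ maximalIdeal A ^ (ℓ + 1))
    (hsoc : ∀ a ∈ maximalIdeal A, a * z ∈ maximalIdeal A ^ (ℓ + 2)) :
    mu (Ideal.span {z} ⊔ maximalIdeal A ^ (ℓ + 1)) = mu (maximalIdeal A ^ (ℓ + 1)) + 1 := by
  classical
  set m : Ideal A := maximalIdeal A with hm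
  set Mp : Ideal A := m ^ (ℓ + 1) with hMp
  set J : Ideal A := Ideal.span {z} ⊔ Mp with hJ
  -- upper bound
  obtain ⟨s, hscard, hsspan⟩ := mu_spec Mp (IsNoetherian.noetherian _)
  have hzs : z ∉ s := fun h => hz1 (by
    rw [← hsspan] at hz1 ⊢
    exact Ideal.subset_span (Finset.mem_coe.mpr h))
  have hspan2 : Ideal.span (↑(insert z s) : Set A) = J := by
    rw [Finset.coe_insert, Ideal.span_insert, hsspan]
  have hub : mu J ≤ mu Mp + 1 := by
    have h1 := mu_le hspan2
    rwa [Finset.card_insert_of_notMem hzs, hscard] at h1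
  -- lower bound
  obtain ⟨t, htcard, htspan⟩ := mu_spec J (IsNoetherian.noetherian _)
  have hdecomp : ∀ w : A, ∃ cu : A × A, w ∈ t → (cu.2 ∈ Mp ∧ w = cu.1 * z + cu.2) := by
    intro w
    by_cases hw : w ∈ t
    · have hwJ : w ∈ J := by
        rw [← htspan]
        exact Ideal.subset_span (Finset.mem_coe.mpr hw)
      rw [hJ, Submodule.mem_sup] at hwJ
      obtain ⟨y, hy, v, hv, hyv⟩ := hwJ
      obtain ⟨a, ha⟩ := Ideal.mem_span_singleton'.mp hy
      exact ⟨(a, v), fun _ => ⟨hv, by rw [← hyv, ha]⟩⟩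
    · exact ⟨(0, 0), fun h => absurd h hw⟩
  choose cu hcu using hdecomp
  set c : A → A := fun w => (cu w).1 with hcdef
  set u : A → A := fun w => (cu w).2 with hudef
  have humem : ∀ w ∈ t, u w ∈ Mp := fun w hw => (hcu w hw).1
  have hwdec : ∀ w ∈ t, w = c w * z + u w := fun w hw => (hcu w hw).2
  -- some coefficient is a unit
  have hw0 : ∃ w ∈ t, c w ∉ m := by
    by_contra hall
    push_neg at hall
    have hK : Ideal.span (↑t : Set A) ≤ m * Ideal.span {z} ⊔ Mp := by
      rw [Ideal.span_le]
      intro w hw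
      have hw' := Finset.mem_coe.mp hw
      rw [hwdec w hw']
      exact Submodule.add_mem _
        (Submodule.mem_sup_left
          (Ideal.mul_mem_mul (hall w hw') (Ideal.mem_span_singleton_self z)))
        (Submodule.mem_sup_right (humem w hw'))
    have hzJ : z ∈ Ideal.span (↑t : Set A) := by
      rw [htspan, hJ]
      exact Submodule.mem_sup_left (Ideal.mem_span_singleton_self z)
    obtain ⟨y, hy, v, hv, hyv⟩ := Submodule.mem_sup.mp (hK hzJ)
    have hy' : ∃ a ∈ m, y = a * z := by
      refine Submodule.mul_induction_on hy ?_ ?_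
      · intro i hi x hx
        obtain ⟨b, hb⟩ := Ideal.mem_span_singleton'.mp hx
        exact ⟨i * b, Ideal.mul_mem_right _ _ hi, by rw [← hb]; ring⟩
      · rintro x y ⟨a, ha, rfl⟩ ⟨b, hb, rfl⟩
        exact ⟨a + b, Ideal.add_mem _ ha hb, by ring⟩
    obtain ⟨a, ha, rfl⟩ := hy'
    have hunit : IsUnit (1 - a) :=
      isUnit_one_sub_self_of_mem_nonunits a ((mem_maximalIdeal a).mp ha)
    obtain ⟨w, hw⟩ := hunit
    have hv' : (1 - a) * z = v := by linear_combination -hyv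
    have hzmem : z ∈ Mp := by
      have h8 : (w : A) * z = v := by rw [hw]; exact hv'
      have h5 : z = ↑w⁻¹ * v := by rw [← h8, Units.inv_mul_cancel_left]
      rw [h5]
      exact Ideal.mul_mem_left _ _ hv
    exact hz1 hzmem
  obtain ⟨w₀, hw₀t, hw₀⟩ := hw0
  have hcunit : IsUnit (c w₀) := by
    by_contra hcu'
    exact hw₀ ((mem_maximalIdeal _).mpr hcu')
  obtain ⟨γu, hγ⟩ := hcunit
  set γ : A := ↑γu⁻¹ with hγdef
  have hγc : c w₀ * γ = 1 := by rw [← hγ, hγdef]; exact Units.mul_inv _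
  set s'' : Finset A := (t.erase w₀).image (fun w => u w - c w * (γ * u w₀)) with hs''
  have hs''sub : (↑s'' : Set A) ⊆ (Mp : Set A) := by
    intro x hx
    obtain ⟨w, hw, rfl⟩ := Finset.mem_image.mp (Finset.mem_coe.mp hx)
    have hwt := Finset.mem_of_mem_erase hw
    exact Ideal.sub_mem _ (humem w hwt)
      (Ideal.mul_mem_left _ _ (Ideal.mul_mem_left _ _ (humem w₀ hw₀t)))
  have hclaim : Mp ≤ Ideal.span (↑s'' : Set A) ⊔ m • Mp := by
    intro τ hτ
    have hτt : τ ∈ Submodule.span A (↑t : Set A) := by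
      rw [Ideal.submodule_span_eq, htspan, hJ]
      exact Submodule.mem_sup_right hτ
    obtain ⟨b, -, hb⟩ := Submodule.mem_span_finset.mp hτt
    simp only [smul_eq_mul] at hb
    set β : A := ∑ w ∈ t, b w * c w with hβdef
    have hσmem : (∑ w ∈ t.erase w₀, b w * (u w - c w * (γ * u w₀)))
        ∈ Ideal.span (↑s'' : Set A) := by
      refine Ideal.sum_mem _ (fun w hw => Ideal.mul_mem_left _ _ ?_)
      exact Ideal.subset_span (Finset.mem_coe.mpr
        (Finset.mem_image_of_mem _ hw))
    have hσMp : (∑ w ∈ t.erase w₀, b w * (u w - c w * (γ * u w₀))) ∈ Mp :=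
      (Ideal.span_le.mpr hs''sub) hσmem
    have hid : τ = (∑ w ∈ t.erase w₀, b w * (u w - c w * (γ * u w₀)))
        + (β * z + (β * γ) * u w₀) := by
      have e1 : τ = ∑ w ∈ t, b w * (c w * z + u w) := by
        rw [← hb]
        exact Finset.sum_congr rfl (fun w hw => by rw [← hwdec w hw])
      have e2 : ∑ w ∈ t, b w * (c w * z + u w) = β * z + ∑ w ∈ t, b w * u w := by
        rw [hβdef, Finset.sum_mul, ← Finset.sum_add_distrib]
        exact Finset.sum_congr rfl (fun w hw => by ring)
      have e3 : ∑ w ∈ t, b w * u w = b w₀ * u w₀ + ∑ w ∈ t.erase w₀, b w * u w :=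
        (Finset.add_sum_erase t _ hw₀t).symm
      have e4 : ∑ w ∈ t.erase w₀, b w * (u w - c w * (γ * u w₀))
          = (∑ w ∈ t.erase w₀, b w * u w)
            - (∑ w ∈ t.erase w₀, b w * c w) * (γ * u w₀) := by
        rw [Finset.sum_mul, ← Finset.sum_sub_distrib]
        exact Finset.sum_congr rfl (fun w hw => by ring)
      have e5 : (∑ w ∈ t.erase w₀, b w * c w) = β - b w₀ * c w₀ := by
        rw [hβdef, ← Finset.add_sum_erase t _ hw₀t]
        ring
      rw [e1, e2, e3, e4, e5]
      linear_combination (-(b w₀ * u w₀)) * hγc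
    have hβz : β * z ∈ Mp := by
      have h6 : β * z = τ - (∑ w ∈ t.erase w₀, b w * (u w - c w * (γ * u w₀)))
          - (β * γ) * u w₀ := by linear_combination -hid
      rw [h6]
      exact Ideal.sub_mem _ (Ideal.sub_mem _ hτ hσMp)
        (Ideal.mul_mem_left _ _ (humem w₀ hw₀t))
    have hβ : β ∈ m := by
      by_contra hβu
      have hβunit : IsUnit β := by
        by_contra h
        exact hβu ((mem_maximalIdeal _).mpr h)
      obtain ⟨v, hv⟩ := hβunit
      have h7 : z ∈ Mp := by
        have h8 : (v : A) * z ∈ Mp := by rw [hv]; exact hβz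
        have h9 : z = ↑v⁻¹ * ((v : A) * z) := by rw [Units.inv_mul_cancel_left]
        rw [h9]
        exact Ideal.mul_mem_left _ _ h8
      exact hz1 h7
    have h10 : β * z + (β * γ) * u w₀ ∈ m • Mp := by
      rw [smul_eq_mul]
      refine Ideal.add_mem _ ?_
        (Ideal.mul_mem_mul (Ideal.mul_mem_right γ _ hβ) (humem w₀ hw₀t))
      have h11 := hsoc β hβ
      have hpow : m ^ (ℓ + 2) = m * m ^ (ℓ + 1) := by rw [pow_succ, mul_comm]
      rw [hpow] at h11
      exact h11
    rw [hid]
    exact Submodule.add_mem _ (Submodule.mem_sup_left hσmem) (Submodule.mem_sup_right h10)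
  have hlow : Mp ≤ Ideal.span (↑s'' : Set A) :=
    Submodule.le_of_le_smul_of_le_jacobson_bot (IsNoetherian.noetherian _)
      (IsLocalRing.maximalIdeal_le_jacobson ⊥) hclaim
  have hs''span : Ideal.span (↑s'' : Set A) = Mp :=
    le_antisymm (Ideal.span_le.mpr hs''sub) hlow
  have hn1 : 1 ≤ t.card := by
    rcases Finset.eq_empty_or_nonempty t with rfl | hne
    · exfalso
      have : J = ⊥ := by rw [← htspan]; simp
      have hzJ : z ∈ J := Submodule.mem_sup_left (Ideal.mem_span_singleton_self z)
      rw [this, Submodule.mem_bot] at hzJ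
      exact hz1 (hzJ ▸ Mp.zero_mem)
    · exact Finset.card_pos.mpr hne
  have hlb : mu Mp + 1 ≤ mu J := by
    have h12 : mu Mp ≤ s''.card := mu_le hs''span
    have h13 : s''.card ≤ (t.erase w₀).card := Finset.card_image_le
    have h14 : (t.erase w₀).card = t.card - 1 := Finset.card_erase_of_mem hw₀t
    omega
  omega

end Mu

/-- If the associated graded ring `G` has depth `0`, i.e. every homogeneous element of
positive degree is a zerodivisor on `G`, then some power of `m` fails the Rees property:
there are `ℓ ≥ 1` and `z ∈ m^ℓ \ m^{ℓ+1}` with `mz ⊆ m^{ℓ+2}`, and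
`J = (z) + m^{ℓ+1}` satisfies `μ(J) = μ(m^{ℓ+1}) + 1`. -/
theorem stmt10 {A : Type*} [CommRing A] [IsNoetherianRing A] [IsLocalRing A]
    (hdim : 1 ≤ ringKrullDim A)
    (hdepth : ∀ d : ℕ, 1 ≤ d → ∀ z ∈ maximalIdeal A ^ d,
      ∃ n : ℕ, ∃ w ∈ maximalIdeal A ^ n,
        w ∉ maximalIdeal A ^ (n + 1) ∧ z * w ∈ maximalIdeal A ^ (n + d + 1)) :
    ∃ ℓ : ℕ, 1 ≤ ℓ ∧ ∃ z ∈ maximalIdeal A ^ ℓ,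
      z ∉ maximalIdeal A ^ (ℓ + 1) ∧
      (∀ a ∈ maximalIdeal A, a * z ∈ maximalIdeal A ^ (ℓ + 2)) ∧
      maximalIdeal A ^ (ℓ + 1) < Ideal.span {z} ⊔ maximalIdeal A ^ (ℓ + 1) ∧
      mu (Ideal.span {z} ⊔ maximalIdeal A ^ (ℓ + 1)) = mu (maximalIdeal A ^ (ℓ + 1)) + 1 := by
  obtain ⟨ℓ, hℓ1, z, hz, hz1, hsoc⟩ := socle_exists hdim hdepth
  refine ⟨ℓ, hℓ1, z, hz, hz1, hsoc, ?_, mu_succ hz1 hsoc⟩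
  refine lt_of_le_of_ne le_sup_right (fun h => hz1 ?_)
  rw [h]
  exact Submodule.mem_sup_left (Ideal.mem_span_singleton_self z)
end
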